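/- arXiv:2309.07603 — 3 statements merged into one kernel-verified Lean document; each statement's English description precedes it below -/
import Mathlib

section
/- Let V be a real inner product space with a complex structure J (J² = -I, J orthogonal), and let W ⊆ V be a subspace. Suppose for every nonzero X ∈ W, the angle θ between JX and W is a constant θ₁ (i.e., the orthogonal projection φX of JX onto W satisfies ‖φX‖ = cos θ₁ · ‖JX‖). Then φ²X = -(cos²θ₁) X for all X ∈ W. -/
open scoped RealInnerProductSpace

/-!
For `x ∈ W` the vector `φ x` is determined by its inner products with `W`, which are those of
`J x`; hence `φ` is additive on `W` and, since `J` is skew-adjoint, so is `φ`. Polarizing the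
slant condition `‖φ x‖² = cos² θ₁ ‖x‖²` gives `⟪φ x, φ y⟫ = cos² θ₁ ⟪x, y⟫`, so
`⟪φ (φ x), y⟫ = -⟪φ x, φ y⟫ = -cos² θ₁ ⟪x, y⟫` for all `y ∈ W`, which pins down `φ (φ x)`.
-/

section

variable {V : Type*} [NormedAddCommGroup V] [InnerProductSpace ℝ V]

theorem Submodule.eq_of_forall_inner_eq {W : Submodule ℝ V} {u v : V} (hu : u ∈ W) (hv : v ∈ W)
    (h : ∀ w ∈ W, ⟪u, w⟫ = ⟪v, w⟫) : u = v := by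
  have hmem : u - v ∈ W ⊓ Wᗮ :=
    ⟨W.sub_mem hu hv, W.sub_mem_orthogonal_of_inner_left fun w => h w w.2⟩
  rw [W.inf_orthogonal_eq_bot, Submodule.mem_bot] at hmem
  exact sub_eq_zero.mp hmem

theorem inner_apply_eq_neg_inner_apply {J : V → V} (hJ2 : ∀ x, J (J x) = -x)
    (hJinner : ∀ x y, ⟪J x, J y⟫ = ⟪x, y⟫) (x y : V) : ⟪J x, y⟫ = -⟪x, J y⟫ := by
  have h := hJinner x (J y)
  rw [hJ2, inner_neg_right] at h
  linarith

structure IsCompression (W : Submodule ℝ V) (T : V →ₗ[ℝ] V) (φ : V → V) : Prop where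
  mem : ∀ x ∈ W, φ x ∈ W
  sub_mem_orthogonal : ∀ x ∈ W, T x - φ x ∈ Wᗮ

namespace IsCompression

variable {W : Submodule ℝ V} {T : V →ₗ[ℝ] V} {φ : V → V} (hφ : IsCompression W T φ)
include hφ

theorem inner_eq {x y : V} (hx : x ∈ W) (hy : y ∈ W) : ⟪φ x, y⟫ = ⟪T x, y⟫ := by
  have h := W.inner_left_of_mem_orthogonal hy (hφ.sub_mem_orthogonal x hx)
  rw [inner_sub_left] at h
  linarith

theorem map_add {x y : V} (hx : x ∈ W) (hy : y ∈ W) : φ (x + y) = φ x + φ y := by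
  refine W.eq_of_forall_inner_eq (hφ.mem _ (W.add_mem hx hy))
    (W.add_mem (hφ.mem x hx) (hφ.mem y hy)) fun w hw => ?_
  rw [hφ.inner_eq (W.add_mem hx hy) hw, inner_add_left, hφ.inner_eq hx hw, hφ.inner_eq hy hw,
    _root_.map_add, inner_add_left]

theorem map_zero : φ 0 = 0 := by
  have h := hφ.map_add W.zero_mem W.zero_mem
  rw [add_zero, left_eq_add] at h
  exact h

theorem inner_eq_neg (hT : ∀ a b, ⟪T a, b⟫ = -⟪a, T b⟫) {x y : V} (hx : x ∈ W) (hy : y ∈ W) :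
    ⟪φ x, y⟫ = -⟪x, φ y⟫ := by
  rw [hφ.inner_eq hx hy, hT, real_inner_comm (T y) x, ← hφ.inner_eq hy hx, real_inner_comm]

theorem inner_map_map {c : ℝ} (hnorm : ∀ x ∈ W, ‖φ x‖ ^ 2 = c * ‖x‖ ^ 2) {x y : V}
    (hx : x ∈ W) (hy : y ∈ W) : ⟪φ x, φ y⟫ = c * ⟪x, y⟫ := by
  have hsum := hnorm _ (W.add_mem hx hy)
  rw [hφ.map_add hx hy, norm_add_sq_real, norm_add_sq_real, hnorm x hx, hnorm y hy] at hsum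
  linear_combination hsum / 2

theorem map_map {c : ℝ} (hT : ∀ a b, ⟪T a, b⟫ = -⟪a, T b⟫)
    (hnorm : ∀ x ∈ W, ‖φ x‖ ^ 2 = c * ‖x‖ ^ 2) {x : V} (hx : x ∈ W) : φ (φ x) = -c • x := by
  refine W.eq_of_forall_inner_eq (hφ.mem _ (hφ.mem x hx)) (W.smul_mem _ hx) fun w hw => ?_
  rw [hφ.inner_eq_neg hT (hφ.mem x hx) hw, hφ.inner_map_map hnorm hx hw, real_inner_smul_left,
    neg_mul]

end IsCompression

end

/-- If `W` is a slant subspace of angle `θ₁` of a real inner product space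
with orthogonal complex structure `J` (i.e. `‖φX‖ = cos θ₁ · ‖JX‖` for all nonzero
`X ∈ W`, where `φX` is the orthogonal projection of `JX` onto `W`), then
`φ²X = -(cos²θ₁) X` for all `X ∈ W`. -/
theorem slant_phi_sq
    {V : Type*} [NormedAddCommGroup V] [InnerProductSpace ℝ V]
    (J : V →ₗ[ℝ] V)
    (hJ2 : ∀ x : V, J (J x) = -x)
    (hJinner : ∀ x y : V, ⟪J x, J y⟫ = ⟪x, y⟫)
    (W : Submodule ℝ V)
    (φ : V → V)
    (hφW : ∀ x ∈ W, φ x ∈ W)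
    (hω : ∀ x ∈ W, J x - φ x ∈ Wᗮ)
    (θ₁ : ℝ)
    (hangle : ∀ x ∈ W, x ≠ 0 → ‖φ x‖ = Real.cos θ₁ * ‖J x‖) :
    ∀ x ∈ W, φ (φ x) = -((Real.cos θ₁) ^ 2) • x := by
  have hφ : IsCompression W J φ := ⟨hφW, hω⟩
  have hnorm : ∀ x ∈ W, ‖φ x‖ ^ 2 = Real.cos θ₁ ^ 2 * ‖x‖ ^ 2 := by
    intro x hx
    rcases eq_or_ne x 0 with rfl | hx0
    · simp [hφ.map_zero]
    · rw [hangle x hx hx0, mul_pow, ← real_inner_self_eq_norm_sq, hJinner,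
        real_inner_self_eq_norm_sq]
  exact fun x hx => hφ.map_map (inner_apply_eq_neg_inner_apply hJ2 hJinner) hnorm hx
end

section
/- Let V be a real inner product space with orthogonal complex structure J, and W a slant subspace with slant angle θ₁; write JX = φX + ωX with φX ∈ W and ωX ∈ W⊥. Then ⟨ωX, ωY⟩ = (sin²θ₁)⟨X, Y⟩ for all X, Y ∈ W. -/
open scoped RealInnerProductSpace

/-- If `W` is a slant subspace of angle `θ₁` (i.e. `φ² = -(cos²θ₁)·id_W`)
of a real inner product space with orthogonal complex structure `J`, and
`ωX = JX - φX` is the normal part of `JX`, then `⟪ωX, ωY⟫ = (sin²θ₁)⟪X, Y⟫`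
for all `X, Y ∈ W`. -/
theorem slant_omega_inner
    {V : Type*} [NormedAddCommGroup V] [InnerProductSpace ℝ V]
    (J : V →ₗ[ℝ] V)
    (hJ2 : ∀ x : V, J (J x) = -x)
    (hJinner : ∀ x y : V, ⟪J x, J y⟫ = ⟪x, y⟫)
    (W : Submodule ℝ V)
    (φ : V → V)
    (hφW : ∀ x ∈ W, φ x ∈ W)
    (hω : ∀ x ∈ W, J x - φ x ∈ Wᗮ)
    (θ₁ : ℝ)
    (hslant : ∀ x ∈ W, φ (φ x) = -((Real.cos θ₁) ^ 2) • x) :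
    ∀ x ∈ W, ∀ y ∈ W, ⟪J x - φ x, J y - φ y⟫ = (Real.sin θ₁) ^ 2 * ⟪x, y⟫ := by
  -- J is skew-adjoint
  have hskew : ∀ x y : V, ⟪J x, y⟫ = -⟪x, J y⟫ := by
    intro x y
    have := hJinner x (J y)
    rw [hJ2] at this
    rw [inner_neg_right] at this
    linarith
  intro x hx y hy
  -- ω parts are orthogonal to W
  have hωx := hω x hx
  have hωy := hω y hy
  -- ⟪J x, φ y⟫ = ⟪φ x, φ y⟫
  have h1 : ⟪J x - φ x, φ y⟫ = 0 := by rw [real_inner_comm]; exact hωx _ (hφW y hy)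
  have h2 : ⟪φ x, J y - φ y⟫ = 0 := by
    exact hωy _ (hφW x hx)
  -- ⟪φ x, φ y⟫ = cos² θ₁ * ⟪x, y⟫
  have hφφ : ⟪φ x, φ y⟫ = (Real.cos θ₁) ^ 2 * ⟪x, y⟫ := by
    have e1 : ⟪J x, φ y⟫ = ⟪φ x, φ y⟫ := by
      have := h1; rw [inner_sub_left] at this; linarith
    have e2 : ⟪J x, φ y⟫ = -⟪x, J (φ y)⟫ := hskew x (φ y)
    have e3 : ⟪x, J (φ y)⟫ = ⟪x, φ (φ y)⟫ := by
      have h3 : ⟪J (φ y) - φ (φ y), x⟫ = 0 := by rw [real_inner_comm]; exact hω (φ y) (hφW y hy) x hx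
      rw [inner_sub_left] at h3
      have := real_inner_comm (J (φ y)) x
      have := real_inner_comm (φ (φ y)) x
      linarith [real_inner_comm (J (φ y)) x, real_inner_comm (φ (φ y)) x]
    rw [hslant y hy] at e3
    rw [inner_smul_right] at e3
    rw [e2, e3] at e1
    rw [← e1]; ring
  have e4 : ⟪J x, J y - φ y⟫ = ⟪J x - φ x, J y - φ y⟫ := by
    rw [inner_sub_left]
    have := h2; rw [inner_sub_right] at this; linarith [inner_sub_right (𝕜 := ℝ) (J x) (J y) (φ y)]
  have expand : ⟪J x - φ x, J y - φ y⟫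
      = ⟪J x, J y⟫ - ⟪J x, φ y⟫ - (⟪φ x, J y⟫ - ⟪φ x, φ y⟫) := by
    rw [inner_sub_left, inner_sub_right, inner_sub_right]
  have e5 : ⟪J x, φ y⟫ = ⟪φ x, φ y⟫ := by
    have := h1; rw [inner_sub_left] at this; linarith
  have e6 : ⟪φ x, J y⟫ = ⟪φ x, φ y⟫ := by
    have := h2; rw [inner_sub_right] at this; linarith
  rw [expand, e5, e6, hJinner, hφφ]
  have : Real.sin θ₁ ^ 2 = 1 - Real.cos θ₁ ^ 2 := by
    have := Real.sin_sq_add_cos_sq θ₁; linarith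
  rw [this]; ring
end

section
/- Legendre-type angle invariance: Let V be a real inner product space with orthogonal complex structure J and W a subspace such that φ² = -λ id_W for some λ ∈ [0,1], where φ is the tangential operator of J on W. Then for every nonzero X ∈ W, the Wirtinger angle satisfies cos θ(X) = ‖φX‖/‖X‖ = √λ; i.e., the pointwise condition φ² = -λ id forces the slant angle to be constant arccos(√λ). -/
open scoped RealInnerProductSpace

/-- If the tangential operator `φ` of `J` on a subspace `W` satisfies
`φ² = -λ·id_W` for some `λ ∈ [0,1]`, then the Wirtinger angle is constant: for every
nonzero `X ∈ W`, `‖φX‖ = √λ ‖X‖` and `‖JX‖ = ‖X‖`, so `cos θ(X) = ‖φX‖/‖JX‖ = √λ`. -/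
theorem pointwise_lambda_constant_angle
    {V : Type*} [NormedAddCommGroup V] [InnerProductSpace ℝ V]
    (J : V →ₗ[ℝ] V)
    (hJ2 : ∀ x : V, J (J x) = -x)
    (hJinner : ∀ x y : V, ⟪J x, J y⟫ = ⟪x, y⟫)
    (W : Submodule ℝ V)
    (φ : V → V)
    (hφW : ∀ x ∈ W, φ x ∈ W)
    (hω : ∀ x ∈ W, J x - φ x ∈ Wᗮ)
    (lam : ℝ) (hlam0 : 0 ≤ lam) (hlam1 : lam ≤ 1)
    (hphisq : ∀ x ∈ W, φ (φ x) = -lam • x) :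
    ∀ x ∈ W, x ≠ 0 →
      ‖φ x‖ = Real.sqrt lam * ‖x‖ ∧ ‖J x‖ = ‖x‖ ∧
      ‖φ x‖ / ‖J x‖ = Real.sqrt lam := by
  intro x hx hx0
  have hskew : ∀ a b : V, ⟪J a, b⟫ = -⟪a, J b⟫ := by
    intro a b
    have := hJinner (J a) b
    rw [hJ2 a] at this
    rw [← this, inner_neg_left]
  -- ⟪φx, φx⟫ = ⟪Jx, φx⟫
  have h1 : ⟪φ x, φ x⟫ = ⟪J x, φ x⟫ := by
    have h := hω x hx
    have : ⟪J x - φ x, φ x⟫ = 0 := (Submodule.mem_orthogonal' W _).1 h _ (hφW x hx)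
    rw [inner_sub_left] at this
    linarith
  -- ⟪Jx, φx⟫ = -⟪x, J(φx)⟫ = -⟪x, φ(φx)⟫ = lam ⟪x,x⟫
  have h2 : ⟪J x, φ x⟫ = lam * ⟪x, x⟫ := by
    have hperp : ⟪x, J (φ x) - φ (φ x)⟫ = 0 := by
      rw [real_inner_comm]
      exact (Submodule.mem_orthogonal Wᗮ x).mp (Submodule.le_orthogonal_orthogonal W hx)
        _ (hω (φ x) (hφW x hx))
    rw [inner_sub_right] at hperp
    have h3 : ⟪x, J (φ x)⟫ = ⟪x, φ (φ x)⟫ := by linarith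
    rw [hskew, h3, hphisq x hx, inner_smul_right]
    ring
  have hnorm : ‖φ x‖ ^ 2 = lam * ‖x‖ ^ 2 := by
    rw [← real_inner_self_eq_norm_sq, ← real_inner_self_eq_norm_sq, h1, h2]
  have hphi : ‖φ x‖ = Real.sqrt lam * ‖x‖ := by
    have := congrArg Real.sqrt hnorm
    rwa [Real.sqrt_sq (norm_nonneg _), Real.sqrt_mul hlam0,
      Real.sqrt_sq (norm_nonneg _)] at this
  have hJn : ‖J x‖ = ‖x‖ := by
    have : ⟪J x, J x⟫ = ⟪x, x⟫ := hJinner x x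
    rw [real_inner_self_eq_norm_sq, real_inner_self_eq_norm_sq] at this
    nlinarith [norm_nonneg (J x), norm_nonneg x]
  refine ⟨hphi, hJn, ?_⟩
  rw [hphi, hJn, mul_div_assoc, div_self (norm_ne_zero_iff.2 hx0), mul_one]
end
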